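/- Let E, B : ℝ³ → ℝ³ be Lipschitz with Lipschitz constants L_E, L_B, and let ε > 0. Consider two solutions (X, V) and (X^h, V^h) of dX/dt = V, dV/dt = F(X) + V × B(εX)/ε and dX^h/dt = V^h, dV^h/dt = F^h(X^h) + V^h × B(εX^h)/ε respectively, with the same initial data, where V^h is uniformly bounded on [0,T]. Then for all t ∈ [0,T], |X(t) − X^h(t)| + |V(t) − V^h(t)| ≤ C e^{Ct} ∫₀ᵗ ‖F − F^h‖_{L^∞} ds, with C depending only on L_E, L_B, T and the bound on V^h. -/

import Mathlib

noncomputable section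

/-- Euclidean norm on `ℝ³`. -/
noncomputable def norm3 (v : Fin 3 → ℝ) : ℝ := Real.sqrt (∑ i, v i ^ 2)

/-- Cross product on `ℝ³`. -/
def cross (u v : Fin 3 → ℝ) : Fin 3 → ℝ :=
  ![u 1 * v 2 - u 2 * v 1, u 2 * v 0 - u 0 * v 2, u 0 * v 1 - u 1 * v 0]

/-!
Energy method. The differences `x = X - Xʰ`, `v = V - Vʰ` satisfy `x' = v` and
`v' = (F(X) - Fʰ(Xʰ)) + (V - Vʰ) × B(εX)/ε + Vʰ × (B(εX) - B(εXʰ))/ε`. The middle term is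
orthogonal to `v`, so it drops out of `(‖x‖² + ‖v‖²)'` however large `1/ε` is, and the last term
is at most `M L_B ‖x‖` because `x ↦ B(εx)/ε` is `L_B`-Lipschitz for every `ε`. Hence
`g = ‖x‖² + ‖v‖²` satisfies `g' ≤ (1 + L) g + 2δ√g` with `L = √3 L_E + √3 M L_B` (the `√3`
converts Lipschitz constants for the sup norm into Euclidean ones), and Grönwall applied to `√g`
gives `√g(t) ≤ δ t e^{(1+L)t/2}`.
-/

open Set Real WithLp Filter
open scoped NNReal Topology RealInnerProductSpace

lemma exp_sub_one_le_mul_exp (y : ℝ) : exp y - 1 ≤ y * exp y := by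
  have h := mul_le_mul_of_nonneg_right (add_one_le_exp (-y)) (exp_pos y).le
  rw [← exp_add, neg_add_cancel, exp_zero] at h
  linarith

lemma gronwallBound_zero_le {K ε x : ℝ} (hK : 0 ≤ K) (hε : 0 ≤ ε) :
    gronwallBound 0 K ε x ≤ ε * x * exp (K * x) := by
  rcases hK.eq_or_lt with rfl | hK
  · simp [gronwallBound_K0]
  · rw [gronwallBound_of_K_ne_0 hK.ne']
    dsimp only
    rw [zero_mul, zero_add, div_mul_eq_mul_div, div_le_iff₀ hK]
    nlinarith [mul_le_mul_of_nonneg_left (exp_sub_one_le_mul_exp (K * x)) hε]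

lemma gronwallBound_continuous_δ (K ε x : ℝ) : Continuous fun δ => gronwallBound δ K ε x := by
  unfold gronwallBound
  split_ifs <;> fun_prop

theorem sqrt_le_gronwallBound_of_deriv_right_le {g g' : ℝ → ℝ} {δ K ε a b : ℝ} (hK : 0 ≤ K)
    (hε : 0 ≤ ε) (hg : ContinuousOn g (Icc a b))
    (hg' : ∀ t ∈ Ico a b, HasDerivWithinAt g (g' t) (Ici t) t)
    (hnonneg : ∀ t ∈ Icc a b, 0 ≤ g t) (ha : √(g a) ≤ δ)
    (bound : ∀ t ∈ Ico a b, g' t ≤ 2 * K * g t + 2 * ε * √(g t)) :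
    ∀ t ∈ Icc a b, √(g t) ≤ gronwallBound δ K ε (t - a) := by
  intro t ht
  -- `√g` need not be differentiable where `g` vanishes, so we run Grönwall on `√(g + η²)`.
  have hη : ∀ η > 0, √(g t) ≤ gronwallBound (δ + η) K ε (t - a) := by
    intro η hη
    have hpos : ∀ s ∈ Icc a b, 0 < g s + η ^ 2 := fun s hs =>
      add_pos_of_nonneg_of_pos (hnonneg s hs) (by positivity)
    have hv' : ∀ s ∈ Ico a b,
        HasDerivWithinAt (fun s => √(g s + η ^ 2)) (g' s / (2 * √(g s + η ^ 2))) (Ici s) s :=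
      fun s hs => ((hg' s hs).add_const _).sqrt (hpos s (Ico_subset_Icc_self hs)).ne'
    have hva : √(g a + η ^ 2) ≤ δ + η := by
      have hga := sq_sqrt (hnonneg a (left_mem_Icc.2 (ht.1.trans ht.2)))
      calc √(g a + η ^ 2) ≤ √((√(g a) + η) ^ 2) :=
            sqrt_le_sqrt (by nlinarith [sqrt_nonneg (g a)])
        _ = √(g a) + η := sqrt_sq (by positivity)
        _ ≤ δ + η := by linarith
    have hbound : ∀ s ∈ Ico a b, g' s / (2 * √(g s + η ^ 2)) ≤ K * √(g s + η ^ 2) + ε := by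
      intro s hs
      have hgs := hnonneg s (Ico_subset_Icc_self hs)
      have hv := sqrt_pos.2 (hpos s (Ico_subset_Icc_self hs))
      have hsq := sq_sqrt (hpos s (Ico_subset_Icc_self hs)).le
      have hle : √(g s) ≤ √(g s + η ^ 2) := sqrt_le_sqrt (by linarith [sq_nonneg η])
      rw [div_le_iff₀ (by positivity)]
      nlinarith [bound s hs, mul_le_mul_of_nonneg_left hle hε]
    calc √(g t) ≤ √(g t + η ^ 2) := sqrt_le_sqrt (by linarith [sq_nonneg η])
      _ ≤ gronwallBound (δ + η) K ε (t - a) :=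
        le_gronwallBound_of_liminf_deriv_right_le ((hg.add continuousOn_const).sqrt)
          (fun s hs _ hr => (hv' s hs).liminf_right_slope_le hr) hva hbound t ht
  have hlim : Tendsto (fun η => gronwallBound (δ + η) K ε (t - a)) (𝓝[>] 0)
      (𝓝 (gronwallBound δ K ε (t - a))) := by
    have hc : Continuous fun η => gronwallBound (δ + η) K ε (t - a) :=
      (gronwallBound_continuous_δ K ε (t - a)).comp (continuous_const_add δ)
    simpa using tendsto_nhdsWithin_of_tendsto_nhds (hc.tendsto 0)
  exact ge_of_tendsto hlim (eventually_nhdsWithin_of_forall fun η (h : 0 < η) => hη η h)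

section SecondOrder

variable {E : Type*} [NormedAddCommGroup E] [InnerProductSpace ℝ E]

lemma energy_deriv_le {x v a : E} {L δ : ℝ} (hL : 0 ≤ L) (hδ : 0 ≤ δ)
    (ha : ⟪v, a⟫ ≤ ‖v‖ * (L * ‖x‖ + δ)) :
    2 * ⟪x, v⟫ + 2 * ⟪v, a⟫
      ≤ 2 * ((1 + L) / 2) * (‖x‖ ^ 2 + ‖v‖ ^ 2) + 2 * δ * √(‖x‖ ^ 2 + ‖v‖ ^ 2) := by
  have hxv := real_inner_le_norm x v
  have hv : ‖v‖ ≤ √(‖x‖ ^ 2 + ‖v‖ ^ 2) := le_sqrt_of_sq_le (by nlinarith [sq_nonneg ‖x‖])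
  have hamgm : 2 * (‖x‖ * ‖v‖) ≤ ‖x‖ ^ 2 + ‖v‖ ^ 2 := by nlinarith [sq_nonneg (‖x‖ - ‖v‖)]
  nlinarith [mul_le_mul_of_nonneg_left hamgm hL, mul_le_mul_of_nonneg_left hv hδ]

lemma add_le_sqrt_two_mul_sqrt (p q : ℝ) :
    p + q ≤ √2 * √(p ^ 2 + q ^ 2) := by
  rw [← sqrt_mul zero_le_two]
  exact le_sqrt_of_sq_le (by nlinarith [sq_nonneg (p - q)])

theorem norm_add_norm_le_of_inner_deriv_le {x v a : ℝ → E} {L δ T : ℝ} (hL : 0 ≤ L)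
    (hδ : 0 ≤ δ) (hx : ∀ t ∈ Icc 0 T, HasDerivAt x (v t) t)
    (hv : ∀ t ∈ Icc 0 T, HasDerivAt v (a t) t) (hx0 : x 0 = 0) (hv0 : v 0 = 0)
    (ha : ∀ t ∈ Icc 0 T, ⟪v t, a t⟫ ≤ ‖v t‖ * (L * ‖x t‖ + δ)) :
    ∀ t ∈ Icc 0 T, ‖x t‖ + ‖v t‖ ≤ √2 * (δ * t * exp ((1 + L) / 2 * t)) := by
  set g : ℝ → ℝ := fun s => ‖x s‖ ^ 2 + ‖v s‖ ^ 2
  have hg' : ∀ s ∈ Icc 0 T, HasDerivAt g (2 * ⟪x s, v s⟫ + 2 * ⟪v s, a s⟫) s :=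
    fun s hs => (hx s hs).norm_sq.add (hv s hs).norm_sq
  have hgron := sqrt_le_gronwallBound_of_deriv_right_le (δ := 0) (K := (1 + L) / 2)
    (by positivity) hδ
    (fun s hs => (hg' s hs).continuousAt.continuousWithinAt)
    (fun s hs => (hg' s (Ico_subset_Icc_self hs)).hasDerivWithinAt)
    (fun s _ => by positivity) (by simp [g, hx0, hv0])
    (fun s hs => energy_deriv_le hL hδ (ha s (Ico_subset_Icc_self hs)))
  intro t ht
  calc ‖x t‖ + ‖v t‖ ≤ √2 * √(g t) := add_le_sqrt_two_mul_sqrt _ _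
    _ ≤ √2 * gronwallBound 0 ((1 + L) / 2) δ t := by
      gcongr
      simpa using hgron t ht
    _ ≤ √2 * (δ * t * exp ((1 + L) / 2 * t)) := by
      gcongr
      exact gronwallBound_zero_le (by positivity) hδ

end SecondOrder

lemma norm3_eq_norm_toLp (v : Fin 3 → ℝ) : norm3 v = ‖toLp 2 v‖ := by
  simp [norm3, EuclideanSpace.norm_eq]

lemma cross_sub_cross (u u' w w' : Fin 3 → ℝ) :
    cross u w - cross u' w' = cross (u - u') w + cross u' (w - w') := by
  ext i; fin_cases i <;> simp [cross] <;> ring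

lemma inner_toLp_cross_self (u w : Fin 3 → ℝ) : ⟪toLp 2 u, toLp 2 (cross u w)⟫ = 0 := by
  simp [PiLp.inner_apply, Fin.sum_univ_three, cross]; ring

lemma norm_toLp_cross_le (u w : Fin 3 → ℝ) :
    ‖toLp 2 (cross u w)‖ ≤ ‖toLp 2 u‖ * ‖toLp 2 w‖ := by
  rw [← sq_le_sq₀ (norm_nonneg _) (by positivity), mul_pow]
  simp only [cross, EuclideanSpace.norm_sq_eq, norm_eq_abs, sq_abs, Fin.sum_univ_three,
    Matrix.cons_val_zero, Matrix.cons_val_one, Matrix.cons_val]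
  -- Lagrange's identity: `|u × w|² = |u|²|w|² - (u ⬝ w)²`.
  nlinarith [sq_nonneg (u 0 * w 0 + u 1 * w 1 + u 2 * w 2)]

lemma LipschitzWith.norm_toLp_sub_le {ι : Type*} [Fintype ι] {L : ℝ≥0}
    {Φ : (ι → ℝ) → ι → ℝ} (h : LipschitzWith L Φ) (x y : ι → ℝ) :
    ‖toLp 2 (Φ x - Φ y)‖ ≤ √(Fintype.card ι) * L * ‖toLp 2 (x - y)‖ := by
  have := (((PiLp.lipschitzWith_toLp 2 _).comp h).comp (PiLp.lipschitzWith_ofLp 2 _)).dist_le_mul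
    (toLp 2 x) (toLp 2 y)
  simp only [Function.comp_apply, dist_eq_norm, ← toLp_sub, one_div, ENNReal.toReal_inv,
    ENNReal.toReal_ofNat, mul_one, NNReal.coe_mul, NNReal.coe_rpow, NNReal.coe_natCast] at this
  convert this using 2
  simp [Real.sqrt_eq_rpow]

lemma LipschitzWith.inv_smul_comp_smul {F : Type*} [NormedAddCommGroup F] [NormedSpace ℝ F]
    {G : Type*} [NormedAddCommGroup G] [NormedSpace ℝ G] {L : ℝ≥0} {B : F → G}
    (hB : LipschitzWith L B) {ε : ℝ} (hε : 0 < ε) : LipschitzWith L fun x => ε⁻¹ • B (ε • x) := by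
  refine LipschitzWith.of_dist_le_mul fun x y => ?_
  rw [dist_smul₀, Real.norm_of_nonneg (inv_nonneg.2 hε.le), inv_mul_le_iff₀ hε]
  calc dist (B (ε • x)) (B (ε • y)) ≤ L * dist (ε • x) (ε • y) := hB.dist_le_mul _ _
    _ = ε * (L * dist x y) := by rw [dist_smul₀, Real.norm_of_nonneg hε.le]; ring

lemma inner_lorentz_sub_le {F Fh B : (Fin 3 → ℝ) → Fin 3 → ℝ} {LE LB : ℝ≥0} {δ ε M : ℝ}
    (hF : LipschitzWith LE F) (hB : LipschitzWith LB B) (hδ : ∀ x, norm3 (F x - Fh x) ≤ δ)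
    (hε : 0 < ε) {X V Xh Vh : Fin 3 → ℝ} (hVh : norm3 Vh ≤ M) :
    ⟪toLp 2 (V - Vh), toLp 2 ((F X + cross V (ε⁻¹ • B (ε • X)))
        - (Fh Xh + cross Vh (ε⁻¹ • B (ε • Xh))))⟫
      ≤ ‖toLp 2 (V - Vh)‖ * ((√3 * LE + M * (√3 * LB)) * ‖toLp 2 (X - Xh)‖ + δ) := by
  have hsplit : (F X + cross V (ε⁻¹ • B (ε • X))) - (Fh Xh + cross Vh (ε⁻¹ • B (ε • Xh)))
      = ((F X - F Xh) + (F Xh - Fh Xh) + cross Vh (ε⁻¹ • B (ε • X) - ε⁻¹ • B (ε • Xh)))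
        + cross (V - Vh) (ε⁻¹ • B (ε • X)) := by
    linear_combination cross_sub_cross V Vh (ε⁻¹ • B (ε • X)) (ε⁻¹ • B (ε • Xh))
  have hFd : ‖toLp 2 (F X - F Xh + (F Xh - Fh Xh))‖ ≤ √3 * LE * ‖toLp 2 (X - Xh)‖ + δ := by
    rw [toLp_add]
    refine (norm_add_le _ _).trans (add_le_add ?_ ?_)
    · simpa using hF.norm_toLp_sub_le X Xh
    · simpa [norm3_eq_norm_toLp] using hδ Xh
  have hBd : ‖toLp 2 (cross Vh (ε⁻¹ • B (ε • X) - ε⁻¹ • B (ε • Xh)))‖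
      ≤ M * (√3 * LB * ‖toLp 2 (X - Xh)‖) := by
    refine (norm_toLp_cross_le _ _).trans (mul_le_mul ?_ ?_ (norm_nonneg _) ?_)
    · rwa [← norm3_eq_norm_toLp]
    · simpa using (hB.inv_smul_comp_smul hε).norm_toLp_sub_le X Xh
    · exact (norm_nonneg _).trans (by rwa [← norm3_eq_norm_toLp])
  rw [hsplit, toLp_add, inner_add_right, inner_toLp_cross_self, add_zero, toLp_add]
  calc _ ≤ ‖toLp 2 (V - Vh)‖ * ‖toLp 2 (F X - F Xh + (F Xh - Fh Xh))
            + toLp 2 (cross Vh (ε⁻¹ • B (ε • X) - ε⁻¹ • B (ε • Xh)))‖ := real_inner_le_norm _ _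
    _ ≤ _ := by
      gcongr
      refine (norm_add_le _ _).trans ?_
      linarith

theorem characteristics_stability_general (T LE LB M : ℝ) (hM : 0 < M) :
    ∃ C > 0, ∀ ε : ℝ, 0 < ε →
      ∀ (F Fh B : (Fin 3 → ℝ) → Fin 3 → ℝ) (X V Xh Vh : ℝ → Fin 3 → ℝ) (δ : ℝ),
      LipschitzWith (Real.toNNReal LE) F →
      LipschitzWith (Real.toNNReal LE) Fh →
      LipschitzWith (Real.toNNReal LB) B →
      (∀ x, norm3 (F x - Fh x) ≤ δ) →
      (∀ t ∈ Set.Icc (0:ℝ) T, norm3 (Vh t) ≤ M) →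
      (∀ t ∈ Set.Icc (0:ℝ) T, HasDerivAt X (V t) t ∧
        HasDerivAt V (F (X t) + cross (V t) (ε⁻¹ • B (ε • X t))) t) →
      (∀ t ∈ Set.Icc (0:ℝ) T, HasDerivAt Xh (Vh t) t ∧
        HasDerivAt Vh (Fh (Xh t) + cross (Vh t) (ε⁻¹ • B (ε • Xh t))) t) →
      X 0 = Xh 0 → V 0 = Vh 0 →
      ∀ t ∈ Set.Icc (0:ℝ) T,
        norm3 (X t - Xh t) + norm3 (V t - Vh t) ≤ C * Real.exp (C * t) * (δ * t) := by
  set L : ℝ := √3 * LE.toNNReal + M * (√3 * LB.toNNReal)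
  have hL : 0 ≤ L := by positivity
  refine ⟨√2 + (1 + L) / 2, by positivity, ?_⟩
  intro ε hε F Fh B X V Xh Vh δ hF _ hB hδ hVh hXV hXhVh hX0 hV0 t ht
  have hδ0 : 0 ≤ δ := (sqrt_nonneg _).trans (hδ 0)
  have henergy := norm_add_norm_le_of_inner_deriv_le (x := fun s => toLp 2 (X s - Xh s))
    (v := fun s => toLp 2 (V s - Vh s)) hL hδ0
    (fun s hs => (PiLp.hasFDerivAt_toLp 2 _).comp_hasDerivAt s ((hXV s hs).1.sub (hXhVh s hs).1))
    (fun s hs => (PiLp.hasFDerivAt_toLp 2 _).comp_hasDerivAt s ((hXV s hs).2.sub (hXhVh s hs).2))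
    (by simp [hX0]) (by simp [hV0])
    (fun s hs => inner_lorentz_sub_le hF hB hδ hε (hVh s hs)) t ht
  rw [norm3_eq_norm_toLp, norm3_eq_norm_toLp]
  have ht0 : 0 ≤ t := ht.1
  calc _ ≤ √2 * exp ((1 + L) / 2 * t) * (δ * t) := henergy.trans_eq (by ring)
    _ ≤ (√2 + (1 + L) / 2) * exp ((√2 + (1 + L) / 2) * t) * (δ * t) := by
      gcongr <;> linarith [sqrt_nonneg 2]

/-- Stability of the characteristic flow under the maximal-ordering scaled magnetic field
`B(εx)/ε`: two solutions driven by fields `F` and `F^h` with the same initial data differ by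
`C e^{Ct} ∫₀ᵗ ‖F − F^h‖_{L^∞} ds`, with `C` independent of `ε`. -/
theorem characteristics_stability (T LE LB M : ℝ) (hT : 0 < T) (hM : 0 < M) :
    ∃ C > 0, ∀ ε : ℝ, 0 < ε →
      ∀ (F Fh B : (Fin 3 → ℝ) → Fin 3 → ℝ) (X V Xh Vh : ℝ → Fin 3 → ℝ) (δ : ℝ),
      LipschitzWith (Real.toNNReal LE) F →
      LipschitzWith (Real.toNNReal LE) Fh →
      LipschitzWith (Real.toNNReal LB) B →
      (∀ x, norm3 (F x - Fh x) ≤ δ) →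
      (∀ t ∈ Set.Icc (0:ℝ) T, norm3 (Vh t) ≤ M) →
      (∀ t ∈ Set.Icc (0:ℝ) T, HasDerivAt X (V t) t ∧
        HasDerivAt V (F (X t) + cross (V t) (ε⁻¹ • B (ε • X t))) t) →
      (∀ t ∈ Set.Icc (0:ℝ) T, HasDerivAt Xh (Vh t) t ∧
        HasDerivAt Vh (Fh (Xh t) + cross (Vh t) (ε⁻¹ • B (ε • Xh t))) t) →
      X 0 = Xh 0 → V 0 = Vh 0 →
      ∀ t ∈ Set.Icc (0:ℝ) T,
        norm3 (X t - Xh t) + norm3 (V t - Vh t) ≤ C * Real.exp (C * t) * (δ * t) :=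
  characteristics_stability_general T LE LB M hM
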